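/- arXiv:1404.1722 — 6 statements merged into one kernel-verified Lean document; each statement's English description precedes it below -/
import Mathlib

section
/- Let N ≥ 2 and let u : [1,∞) → ℝ be a C² function whose radial derivative u_r satisfies: for all 1 ≤ r₁ < r₂ < ∞ and all Lipschitz functions η on [r₁,r₂] with η(r₁)·u_r(r₁) = 0 and η(r₂)·u_r(r₂) = 0, one has ∫_{r₁}^{r₂} r^{N-1} u_r(r)² (η'(r)² − (N−1)/r² · η(r)²) dr ≥ 0. If u_r(r₁) = 0 and u_r(r₂) = 0 for some 1 ≤ r₁ < r₂, then u_r ≡ 0 on [r₁,r₂]. -/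
open Set MeasureTheory intervalIntegral

theorem dichotomy_stmt0 (N : ℕ) (hN : 2 ≤ N) (u ur : ℝ → ℝ)
    (hC2 : ContDiffOn ℝ 2 u (Ici 1))
    (hur : ∀ r : ℝ, 1 ≤ r → HasDerivAt u (ur r) r)
    (hstab : ∀ r₁ r₂ : ℝ, 1 ≤ r₁ → r₁ < r₂ →
      ∀ (C : NNReal) (η : ℝ → ℝ), LipschitzOnWith C η (Icc r₁ r₂) →
        η r₁ * ur r₁ = 0 → η r₂ * ur r₂ = 0 →
        0 ≤ ∫ r in r₁..r₂, r ^ ((N : ℝ) - 1) * (ur r) ^ 2 *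
              ((deriv η r) ^ 2 - ((N : ℝ) - 1) / r ^ 2 * (η r) ^ 2))
    (r₁ r₂ : ℝ) (h1 : 1 ≤ r₁) (h12 : r₁ < r₂)
    (hz1 : ur r₁ = 0) (hz2 : ur r₂ = 0) :
    ∀ r ∈ Icc r₁ r₂, ur r = 0 := by
  intro r hr
  by_contra hne
  have hrI : r ∈ Ioo r₁ r₂ := by
    rcases eq_or_lt_of_le hr.1 with h | h
    · exact absurd (h ▸ hz1) hne
    rcases eq_or_lt_of_le hr.2 with h' | h'
    · exact absurd (h' ▸ hz2) hne
    exact ⟨h, h'⟩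
  have hN1 : (0:ℝ) < (N:ℝ) - 1 := by
    have : (2:ℝ) ≤ (N:ℝ) := by exact_mod_cast hN
    linarith
  -- ur is continuous on Icc r₁ r₂
  have hsub : Icc r₁ r₂ ⊆ Ici 1 := fun x hx => le_trans h1 hx.1
  have hcont : ContinuousOn ur (Icc r₁ r₂) := by
    have h1' : ContinuousOn (derivWithin u (Ici 1)) (Ici 1) :=
      hC2.continuousOn_derivWithin (uniqueDiffOn_Ici 1) one_le_two
    refine ((h1'.mono hsub).congr ?_)
    intro x hx
    exact ((hur x (hsub hx)).hasDerivWithinAt.derivWithin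
      (uniqueDiffOn_Ici 1 x (hsub hx))).symm
  -- apply stability with η ≡ 1
  have hstab1 := hstab r₁ r₂ h1 h12 0 (fun _ => 1)
    (LipschitzWith.lipschitzOnWith (LipschitzWith.const 1))
    (by simp [hz1]) (by simp [hz2])
  simp only [deriv_const', one_pow, mul_one, ne_eq, OfNat.ofNat_ne_zero,
    not_false_eq_true, zero_pow, zero_sub] at hstab1
  -- the negated integrand is continuous, nonneg, and positive at r
  set g : ℝ → ℝ := fun x => x ^ ((N:ℝ) - 1) * (ur x) ^ 2 * (((N:ℝ) - 1) / x ^ 2) with hg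
  have hpos : (0:ℝ) < ∫ x in r₁..r₂, g x := by
    apply intervalIntegral.integral_pos h12
    · apply ContinuousOn.mul
      · apply ContinuousOn.mul
        · exact (continuousOn_id.rpow_const (fun x hx =>
            Or.inl (by have := hsub hx; simp at this ⊢; linarith)))
        · exact (hcont.pow 2)
      · apply ContinuousOn.div continuousOn_const (continuousOn_pow 2)
        intro x hx
        have : (1:ℝ) ≤ x := hsub hx
        positivity
    · intro x hx
      have hx1 : (1:ℝ) ≤ x := le_trans h1 hx.1.le
      have hx0 : (0:ℝ) < x := lt_of_lt_of_le one_pos hx1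
      have := Real.rpow_nonneg hx0.le ((N:ℝ) - 1)
      positivity
    · refine ⟨r, ⟨hrI.1.le, hrI.2.le⟩, ?_⟩
      have hx1 : (1:ℝ) ≤ r := le_trans h1 hrI.1.le
      have hx0 : (0:ℝ) < r := lt_of_lt_of_le one_pos hx1
      have h1 := Real.rpow_pos_of_pos hx0 ((N:ℝ) - 1)
      have h2 : (0:ℝ) < (ur r) ^ 2 := by positivity
      positivity
  have : (∫ x in r₁..r₂, x ^ ((N:ℝ) - 1) * (ur x) ^ 2 * (-(((N:ℝ) - 1) / x ^ 2)))
      = - ∫ x in r₁..r₂, g x := by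
    rw [← intervalIntegral.integral_neg]
    congr 1; ext x; ring
  rw [this] at hstab1
  linarith
end

section
/- Let N ≥ 2, a ≥ 1, K > 0, and let u : [a,∞) → ℝ be C¹ with u_r(r) ≠ 0 for all r ≥ a. Suppose ∫_r^{2r} ds / u_r(s)² ≤ K · r^{N − 2√(N−1) − 1} for all r ≥ a. Then |u(2r) − u(r)| ≥ K^{−1/2} · r^{−N/2 + √(N−1) + 2} for all r ≥ a. -/
open Set MeasureTheory intervalIntegral

theorem dichotomy_stmt1 (N : ℕ) (hN : 2 ≤ N) (a K : ℝ) (ha : 1 ≤ a) (hK : 0 < K)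
    (u ur : ℝ → ℝ)
    (hur : ∀ r : ℝ, a ≤ r → HasDerivAt u (ur r) r)
    (hcont : ContinuousOn ur (Ici a))
    (hne : ∀ r : ℝ, a ≤ r → ur r ≠ 0)
    (hint : ∀ r : ℝ, a ≤ r →
      (∫ s in r..2*r, 1 / (ur s) ^ 2) ≤ K * r ^ ((N : ℝ) - 2 * Real.sqrt ((N : ℝ) - 1) - 1)) :
    ∀ r : ℝ, a ≤ r →
      K ^ (-(1:ℝ)/2) * r ^ (-(N : ℝ)/2 + Real.sqrt ((N : ℝ) - 1) + 2) ≤ |u (2*r) - u r| := by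
  intro r hr
  have hr0 : (0:ℝ) < r := lt_of_lt_of_le zero_lt_one (ha.trans hr)
  have hrle : r ≤ 2*r := by linarith
  have hsub' : Icc r (2*r) ⊆ Ici a := fun x hx => le_trans hr hx.1
  have hsub : Ioc r (2*r) ⊆ Ici a := fun x hx => hsub' (Ioc_subset_Icc_self hx)
  set α : ℝ := (N : ℝ) - 2 * Real.sqrt ((N : ℝ) - 1) - 1 with hα
  have hcur : ContinuousOn ur (Icc r (2*r)) := hcont.mono hsub'
  -- sign constancy
  have hsign : (∀ x ∈ Icc r (2*r), 0 < ur x) ∨ (∀ x ∈ Icc r (2*r), ur x < 0) := by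
    rcases (hne r hr).lt_or_gt with h | h
    · right
      intro x hx
      by_contra hcx
      push_neg at hcx
      have hx0 : ur x ≠ 0 := hne x (hsub' hx)
      have hxpos : 0 < ur x := lt_of_le_of_ne hcx (Ne.symm hx0)
      have : (0:ℝ) ∈ Icc (ur r) (ur x) := ⟨h.le, hxpos.le⟩
      have hsubx : Icc r x ⊆ Icc r (2*r) := Icc_subset_Icc le_rfl hx.2
      obtain ⟨y, hy, hy0⟩ := intermediate_value_Icc hx.1 (hcur.mono hsubx) this
      exact hne y (hsub' (hsubx hy)) hy0
    · left
      intro x hx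
      by_contra hcx
      push_neg at hcx
      have hx0 : ur x ≠ 0 := hne x (hsub' hx)
      have hxneg : ur x < 0 := lt_of_le_of_ne hcx hx0
      have : (0:ℝ) ∈ Icc (ur x) (ur r) := ⟨hxneg.le, h.le⟩
      have hsubx : Icc r x ⊆ Icc r (2*r) := Icc_subset_Icc le_rfl hx.2
      obtain ⟨y, hy, hy0⟩ := intermediate_value_Icc' hx.1 (hcur.mono hsubx) this
      exact hne y (hsub' (hsubx hy)) hy0
  -- FTC
  have hInt : IntervalIntegrable ur volume r (2*r) := by
    apply ContinuousOn.intervalIntegrable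
    rwa [uIcc_of_le hrle]
  have hftc : ∫ s in r..2*r, ur s = u (2*r) - u r := by
    refine intervalIntegral.integral_eq_sub_of_hasDerivAt (fun x hx => ?_) hInt
    exact hur x (hsub' (by rwa [uIcc_of_le hrle] at hx))
  have hioc : ∫ s in r..2*r, ur s = ∫ s in Ioc r (2*r), ur s :=
    intervalIntegral.integral_of_le hrle
  -- |u(2r) - u r| = ∫ |ur|
  have habs : |u (2*r) - u r| = ∫ s in Ioc r (2*r), |ur s| := by
    rcases hsign with h | h
    · have he : ∫ s in Ioc r (2*r), |ur s| = ∫ s in Ioc r (2*r), ur s :=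
        setIntegral_congr_fun measurableSet_Ioc fun x hx =>
          abs_of_pos (h x (Ioc_subset_Icc_self hx))
      have hnn : 0 ≤ ∫ s in Ioc r (2*r), ur s :=
        setIntegral_nonneg measurableSet_Ioc fun x hx => (h x (Ioc_subset_Icc_self hx)).le
      rw [← hftc, hioc, abs_of_nonneg hnn, he]
    · have he : ∫ s in Ioc r (2*r), |ur s| = ∫ s in Ioc r (2*r), -ur s :=
        setIntegral_congr_fun measurableSet_Ioc fun x hx =>
          abs_of_neg (h x (Ioc_subset_Icc_self hx))
      have hnp : ∫ s in Ioc r (2*r), ur s ≤ 0 :=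
        setIntegral_nonpos measurableSet_Ioc fun x hx => (h x (Ioc_subset_Icc_self hx)).le
      rw [← hftc, hioc, abs_of_nonpos hnp, he, MeasureTheory.integral_neg]
  set M : ℝ := ∫ s in Ioc r (2*r), |ur s| with hM
  have hM0 : 0 ≤ M := setIntegral_nonneg measurableSet_Ioc fun x _ => abs_nonneg _
  -- Hölder
  have hpq : Real.HolderConjugate 3 (3/2) := ⟨by norm_num, by norm_num, by norm_num⟩
  set f : ℝ → ℝ := fun x => |ur x| ^ (-(2:ℝ)/3) with hf
  set g : ℝ → ℝ := fun x => |ur x| ^ ((2:ℝ)/3) with hg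
  have hfc : ContinuousOn f (Icc r (2*r)) :=
    hcur.abs.rpow_const fun x hx => Or.inl (abs_ne_zero.mpr (hne x (hsub' hx)))
  have hgc : ContinuousOn g (Icc r (2*r)) :=
    hcur.abs.rpow_const fun x hx => Or.inr (by norm_num)
  haveI : IsFiniteMeasure (volume.restrict (Ioc r (2*r))) :=
    ⟨by rw [Measure.restrict_apply_univ]; exact measure_Ioc_lt_top⟩
  obtain ⟨Cf, hCf⟩ := isCompact_Icc.exists_bound_of_continuousOn hfc
  obtain ⟨Cg, hCg⟩ := isCompact_Icc.exists_bound_of_continuousOn hgc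
  have hfm : MemLp f (ENNReal.ofReal 3) (volume.restrict (Ioc r (2*r))) := by
    refine MemLp.of_bound ((hfc.mono Ioc_subset_Icc_self).aestronglyMeasurable measurableSet_Ioc)
      Cf ?_
    exact (ae_restrict_iff' measurableSet_Ioc).mpr
      (ae_of_all _ fun x hx => hCf x (Ioc_subset_Icc_self hx))
  have hgm : MemLp g (ENNReal.ofReal (3/2)) (volume.restrict (Ioc r (2*r))) := by
    refine MemLp.of_bound ((hgc.mono Ioc_subset_Icc_self).aestronglyMeasurable measurableSet_Ioc)
      Cg ?_
    exact (ae_restrict_iff' measurableSet_Ioc).mpr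
      (ae_of_all _ fun x hx => hCg x (Ioc_subset_Icc_self hx))
  have hfnn : 0 ≤ᵐ[volume.restrict (Ioc r (2*r))] f :=
    ae_of_all _ fun x => Real.rpow_nonneg (abs_nonneg _) _
  have hgnn : 0 ≤ᵐ[volume.restrict (Ioc r (2*r))] g :=
    ae_of_all _ fun x => Real.rpow_nonneg (abs_nonneg _) _
  have holder := MeasureTheory.integral_mul_le_Lp_mul_Lq_of_nonneg hpq hfnn hgnn hfm hgm
  -- LHS of Hölder = r
  have hlhs : ∫ x in Ioc r (2*r), f x * g x = r := by
    have he : ∫ x in Ioc r (2*r), f x * g x = ∫ x in Ioc r (2*r), (1:ℝ) := by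
      refine setIntegral_congr_fun measurableSet_Ioc fun x hx => ?_
      have hx0 : 0 < |ur x| := abs_pos.mpr (hne x (hsub hx))
      simp only [hf, hg]
      rw [← Real.rpow_add hx0]
      norm_num
    rw [he, setIntegral_const, smul_eq_mul, mul_one, measureReal_def, Real.volume_Ioc,
      ENNReal.toReal_ofReal (by linarith)]
    ring
  -- f^3 integral equals the hypothesis integral
  have hfint : ∫ x in Ioc r (2*r), f x ^ (3:ℝ) = ∫ s in r..2*r, 1 / (ur s) ^ 2 := by
    rw [intervalIntegral.integral_of_le hrle]
    refine setIntegral_congr_fun measurableSet_Ioc fun x hx => ?_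
    have hx0 : 0 < |ur x| := abs_pos.mpr (hne x (hsub hx))
    simp only [hf]
    have h1 : (|ur x| ^ (-(2:ℝ)/3)) ^ (3:ℝ) = |ur x| ^ (-2:ℝ) := by
      rw [← Real.rpow_mul (abs_nonneg _)]
      norm_num
    rw [h1, Real.rpow_neg (abs_nonneg _),
      show ((2:ℝ)) = ((2:ℕ):ℝ) from by norm_num, Real.rpow_natCast, sq_abs, one_div]
  have hgint : ∫ x in Ioc r (2*r), g x ^ ((3:ℝ)/2) = M := by
    refine setIntegral_congr_fun measurableSet_Ioc fun x hx => ?_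
    simp only [hg]
    rw [← Real.rpow_mul (abs_nonneg _)]
    norm_num
  rw [hlhs, hfint, hgint] at holder
  -- combine with hint
  have hJnn : 0 ≤ ∫ s in r..2*r, 1 / (ur s) ^ 2 := by
    rw [intervalIntegral.integral_of_le hrle]
    exact setIntegral_nonneg measurableSet_Ioc fun x _ => by positivity
  have hP : 0 < K * r ^ α := mul_pos hK (Real.rpow_pos_of_pos hr0 _)
  have hkey : r ≤ (K * r ^ α) ^ ((1:ℝ)/3) * M ^ (1/(3/2):ℝ) := by
    refine holder.trans (mul_le_mul_of_nonneg_right ?_ (Real.rpow_nonneg hM0 _))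
    exact Real.rpow_le_rpow hJnn (hint r hr) (by norm_num)
  have h23 : (1/(3/2):ℝ) = 2/3 := by norm_num
  rw [h23] at hkey
  -- raise to power 3/2
  have hfinal : r ^ ((3:ℝ)/2) ≤ (K * r ^ α) ^ ((1:ℝ)/2) * M := by
    have := Real.rpow_le_rpow hr0.le hkey (by norm_num : (0:ℝ) ≤ 3/2)
    calc r ^ ((3:ℝ)/2) ≤ ((K * r ^ α) ^ ((1:ℝ)/3) * M ^ ((2:ℝ)/3)) ^ ((3:ℝ)/2) := this
      _ = (K * r ^ α) ^ ((1:ℝ)/2) * M := by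
          rw [Real.mul_rpow (Real.rpow_nonneg hP.le _) (Real.rpow_nonneg hM0 _),
            ← Real.rpow_mul hP.le, ← Real.rpow_mul hM0]
          norm_num
  -- conclude
  rw [habs]
  have hPpow : (0:ℝ) < (K * r ^ α) ^ ((1:ℝ)/2) := Real.rpow_pos_of_pos hP _
  rw [← div_le_iff₀' hPpow] at hfinal
  refine le_trans (le_of_eq ?_) hfinal
  rw [Real.mul_rpow hK.le (Real.rpow_pos_of_pos hr0 α).le, ← Real.rpow_mul hr0.le,
    eq_div_iff (by positivity), mul_mul_mul_comm, ← Real.rpow_add hK, ← Real.rpow_add hr0,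
    show (-(1:ℝ)/2 + 1/2) = 0 from by norm_num, Real.rpow_zero, one_mul]
  congr 1
  rw [hα]
  ring
end

section
/- Let 2 ≤ N ≤ 9, a ≥ 1, M' > 0, and let u : [a,∞) → ℝ be continuous and monotone on [a,∞) with |u(2r) − u(r)| ≥ M' · r^{−N/2 + √(N−1) + 2} for all r ≥ a. Then there exist M > 0 and r₀ ≥ a such that |u(r)| ≥ M · r^{−N/2 + √(N−1) + 2} for all r ≥ r₀. -/
open Set

private lemma aux_mono (α a M' : ℝ) (hα : 0 < α) (ha : 1 ≤ a) (hM' : 0 < M')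
    (u : ℝ → ℝ) (hmono : MonotoneOn u (Ici a))
    (hd : ∀ r : ℝ, a ≤ r → M' * r ^ α ≤ |u (2*r) - u r|) :
    ∃ M > 0, ∃ r₀ : ℝ, a ≤ r₀ ∧ ∀ r : ℝ, r₀ ≤ r → M * r ^ α ≤ |u r| := by
  have ha0 : (0:ℝ) < a := lt_of_lt_of_le one_pos ha
  have h2α : (0:ℝ) < (2:ℝ) ^ (α+1) := Real.rpow_pos_of_pos two_pos _
  set M : ℝ := M' / (2:ℝ) ^ (α+1) with hM
  have hMpos : 0 < M := div_pos hM' h2α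
  -- key estimate: for r ≥ 2a, u r ≥ u a + 2 * M * r^α
  have key : ∀ r : ℝ, 2*a ≤ r → u a + 2 * M * r ^ α ≤ u r := by
    intro r hr
    have hra : a ≤ r/2 := by linarith
    have hrr : (0:ℝ) ≤ r := by linarith
    have h1 : u a ≤ u (r/2) :=
      hmono (self_mem_Ici) (by exact hra) hra
    have h2 := hd (r/2) hra
    have heq : 2*(r/2) = r := by ring
    have hmon2 : u (r/2) ≤ u (2*(r/2)) :=
      hmono (by exact hra) (by rw [heq]; exact mem_Ici.2 (by linarith)) (by linarith)
    rw [abs_of_nonneg (by linarith)] at h2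
    have hpow : (r/2) ^ α = r ^ α / (2:ℝ) ^ α := Real.div_rpow hrr (by norm_num) α
    have h2pow : (2:ℝ) ^ (α+1) = (2:ℝ) ^ α * 2 := by
      rw [Real.rpow_add two_pos, Real.rpow_one]
    have h2αpos : (0:ℝ) < (2:ℝ) ^ α := Real.rpow_pos_of_pos two_pos _
    have hM2 : 2 * M * r ^ α = M' * (r/2) ^ α := by
      rw [hpow, hM, h2pow]
      field_simp
    rw [heq] at h2 hmon2
    nlinarith [h2]
  -- choose r₀
  set B : ℝ := max 1 ((2:ℝ) ^ (α+1) * |u a| / M') with hB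
  have hB1 : (1:ℝ) ≤ B := le_max_left _ _
  have hB0 : (0:ℝ) ≤ B := by linarith
  set r₀ : ℝ := max (2*a) (B ^ α⁻¹) with hr₀
  have har₀ : a ≤ r₀ := le_trans (by linarith) (le_max_left _ _)
  refine ⟨M, hMpos, r₀, har₀, fun r hr => ?_⟩
  have hr2a : 2*a ≤ r := le_trans (le_max_left _ _) hr
  have hrB : B ^ α⁻¹ ≤ r := le_trans (le_max_right _ _) hr
  have hrBα : B ≤ r ^ α := by
    have h1 : (B ^ α⁻¹) ^ α ≤ r ^ α :=
      Real.rpow_le_rpow (Real.rpow_nonneg hB0 _) hrB hα.le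
    rwa [Real.rpow_inv_rpow hB0 hα.ne'] at h1
  have hua : |u a| ≤ M * r ^ α := by
    have h1 : (2:ℝ) ^ (α+1) * |u a| / M' ≤ B := le_max_right _ _
    have h2 : (2:ℝ) ^ (α+1) * |u a| / M' ≤ r ^ α := le_trans h1 hrBα
    rw [div_le_iff₀ hM'] at h2
    rw [hM, div_mul_eq_mul_div, le_div_iff₀ h2α]
    nlinarith
  have hk := key r hr2a
  have hur : M * r ^ α ≤ u r := by nlinarith [neg_abs_le (u a)]
  exact le_trans hur (le_abs_self _)

theorem dichotomy_stmt2 (N : ℕ) (hN2 : 2 ≤ N) (hN9 : N ≤ 9) (a M' : ℝ)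
    (ha : 1 ≤ a) (hM' : 0 < M') (u : ℝ → ℝ)
    (hcont : ContinuousOn u (Ici a))
    (hmono : MonotoneOn u (Ici a) ∨ AntitoneOn u (Ici a))
    (hd : ∀ r : ℝ, a ≤ r →
      M' * r ^ (-(N : ℝ)/2 + Real.sqrt ((N : ℝ) - 1) + 2) ≤ |u (2*r) - u r|) :
    ∃ M > 0, ∃ r₀ : ℝ, a ≤ r₀ ∧
      ∀ r : ℝ, r₀ ≤ r → M * r ^ (-(N : ℝ)/2 + Real.sqrt ((N : ℝ) - 1) + 2) ≤ |u r| := by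
  set α : ℝ := -(N : ℝ)/2 + Real.sqrt ((N : ℝ) - 1) + 2 with hαdef
  have hα : 0 < α := by
    have hs0 : 0 ≤ Real.sqrt ((N:ℝ) - 1) := Real.sqrt_nonneg _
    have hs2 : Real.sqrt ((N:ℝ) - 1) ^ 2 = (N:ℝ) - 1 := by
      rw [Real.sq_sqrt]
      have : (2:ℝ) ≤ (N:ℝ) := by exact_mod_cast hN2
      linarith
    have hN2' : (2:ℝ) ≤ (N:ℝ) := by exact_mod_cast hN2
    have hN9' : (N:ℝ) ≤ 9 := by exact_mod_cast hN9
    rw [hαdef]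
    nlinarith [hs2, hs0, sq_nonneg (Real.sqrt ((N:ℝ) - 1) - 1)]
  rcases hmono with hm | hm
  · exact aux_mono α a M' hα ha hM' u hm hd
  · have hm' : MonotoneOn (fun x => -u x) (Ici a) := fun x hx y hy hxy =>
      neg_le_neg (hm hx hy hxy)
    have hd' : ∀ r : ℝ, a ≤ r → M' * r ^ α ≤ |(fun x => -u x) (2*r) - (fun x => -u x) r| := by
      intro r hr
      have : (fun x => -u x) (2*r) - (fun x => -u x) r = -(u (2*r) - u r) := by simp; ring
      rw [this, abs_neg]
      exact hd r hr
    obtain ⟨M, hM, r₀, hr₀, h⟩ := aux_mono α a M' hα ha hM' (fun x => -u x) hm' hd'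
    exact ⟨M, hM, r₀, hr₀, fun r hr => by simpa using h r hr⟩
end

section
/- Let N ≥ 11, a ≥ 1, K > 0, 1 ≤ p ≤ N/(N/2 − √(N−1) − 1), and let u : [a,∞) → ℝ be C¹ with u_r(r) ≠ 0 for all r ≥ a and ∫_r^{2r} ds/u_r(s)² ≤ K · r^{N − 2√(N−1) − 1} for all r ≥ a. Then ∫_r^{2r} s^{N−1} |u_r(s)|^p ds ≥ K^{−p/2} for all r ≥ a; consequently ∫_a^∞ s^{N−1} |u_r(s)|^p ds = +∞. -/
open Set MeasureTheory intervalIntegral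

private lemma abs_rpow_neg_two' (y : ℝ) : |y| ^ (-2 : ℝ) = 1 / y ^ 2 := by
  rcases eq_or_ne y 0 with h | h
  · simp [h, Real.zero_rpow (by norm_num : (-2:ℝ) ≠ 0)]
  · rw [Real.rpow_neg (abs_nonneg y), show (2:ℝ) = ((2:ℕ):ℝ) by norm_num,
      Real.rpow_natCast, sq_abs, one_div]

theorem dichotomy_stmt11 (N : ℕ) (hN : 11 ≤ N) (a K p : ℝ) (ha : 1 ≤ a) (hK : 0 < K)
    (hp1 : 1 ≤ p) (hp2 : p ≤ (N : ℝ) / ((N : ℝ)/2 - Real.sqrt ((N : ℝ) - 1) - 1))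
    (u ur : ℝ → ℝ)
    (hur : ∀ r : ℝ, a ≤ r → HasDerivAt u (ur r) r)
    (hcont : ContinuousOn ur (Ici a))
    (hne : ∀ r : ℝ, a ≤ r → ur r ≠ 0)
    (hint : ∀ r : ℝ, a ≤ r →
      (∫ s in r..2*r, 1 / (ur s) ^ 2) ≤ K * r ^ ((N : ℝ) - 2 * Real.sqrt ((N : ℝ) - 1) - 1)) :
    (∀ r : ℝ, a ≤ r →
        K ^ (-p/2) ≤ ∫ s in r..2*r, s ^ ((N : ℝ) - 1) * |ur s| ^ p) ∧
    (∫⁻ s in Ici a, ENNReal.ofReal (s ^ ((N : ℝ) - 1) * |ur s| ^ p)) = ⊤ := by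
  have hp0 : 0 < p := lt_of_lt_of_le one_pos hp1
  have hp2' : (0:ℝ) < p + 2 := by linarith
  have ha0 : 0 < a := lt_of_lt_of_le one_pos ha
  have hN11 : (11:ℝ) ≤ (N:ℝ) := by exact_mod_cast hN
  have hNexp : (0:ℝ) ≤ (N:ℝ) - 1 := by linarith
  set sN : ℝ := Real.sqrt ((N:ℝ) - 1) with hsN
  have hD : 0 < (N:ℝ)/2 - sN - 1 := by
    have h1 : sN < (N:ℝ)/2 - 1 := by
      rw [hsN]
      exact (Real.sqrt_lt' (by linarith)).mpr (by nlinarith)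
    linarith
  have hβ : 0 ≤ (N:ℝ) - p * ((N:ℝ)/2 - sN - 1) := by
    have h2 : p * ((N:ℝ)/2 - sN - 1) ≤ (N:ℝ) := (le_div_iff₀ hD).mp hp2
    linarith
  -- continuity / integrability helpers
  have hsub : ∀ r : ℝ, a ≤ r → Icc r (2*r) ⊆ Ici a := by
    intro r hr x hx
    have hr1 : (1:ℝ) ≤ r := ha.trans hr
    exact le_trans hr hx.1
  have hcontp : ∀ r : ℝ, a ≤ r → ContinuousOn (fun s => |ur s| ^ p) (Icc r (2*r)) := by
    intro r hr
    exact ((hcont.mono (hsub r hr)).abs).rpow_const (fun x _ => Or.inr hp0.le)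
  have hFcont : ∀ r : ℝ, a ≤ r →
      ContinuousOn (fun s : ℝ => s ^ ((N:ℝ)-1) * |ur s| ^ p) (Icc r (2*r)) := by
    intro r hr
    exact (continuousOn_id.rpow_const (fun x _ => Or.inr hNexp)).mul (hcontp r hr)
  have hFint : ∀ r : ℝ, a ≤ r →
      IntegrableOn (fun s : ℝ => s ^ ((N:ℝ)-1) * |ur s| ^ p) (Ioc r (2*r)) := by
    intro r hr
    exact ((hFcont r hr).integrableOn_Icc).mono_set Ioc_subset_Icc_self
  -- main estimate
  have main : ∀ r : ℝ, a ≤ r →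
      K ^ (-p/2) ≤ ∫ s in r..2*r, s ^ ((N:ℝ)-1) * |ur s| ^ p := by
    intro r hr
    have hr1 : (1:ℝ) ≤ r := ha.trans hr
    have hr0 : (0:ℝ) < r := lt_of_lt_of_le one_pos hr1
    have hrr : r ≤ 2 * r := by linarith
    have hcont' : ContinuousOn ur (Icc r (2*r)) := hcont.mono (hsub r hr)
    have hne' : ∀ x ∈ Icc r (2*r), ur x ≠ 0 := fun x hx => hne x (hsub r hr hx)
    have hcontw : ContinuousOn (fun s => 1 / (ur s) ^ 2) (Icc r (2*r)) :=
      continuousOn_const.div (hcont'.pow 2) (fun x hx => pow_ne_zero 2 (hne' x hx))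
    have hintp : IntegrableOn (fun s => |ur s| ^ p) (Ioc r (2*r)) :=
      ((hcontp r hr).integrableOn_Icc).mono_set Ioc_subset_Icc_self
    have hintw : IntegrableOn (fun s => 1 / (ur s) ^ 2) (Ioc r (2*r)) :=
      (hcontw.integrableOn_Icc).mono_set Ioc_subset_Icc_self
    set c : ℝ := 2*p/(p+2) with hc
    set q1 : ℝ := (p+2)/2 with hq1
    set q2 : ℝ := (p+2)/p with hq2
    have hq1pos : 0 < q1 := by rw [hq1]; positivity
    have hq2pos : 0 < q2 := by rw [hq2]; positivity
    have hconj : Real.HolderConjugate q1 q2 := by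
      constructor
      · rw [hq1, hq2, inv_div, inv_div, inv_one, ← add_div,
          show (2:ℝ) + p = p + 2 by ring, div_self hp2'.ne']
      · exact hq1pos
      · exact hq2pos
    have hmeas : AEMeasurable ur (volume.restrict (Ioc r (2*r))) :=
      (hcont'.mono Ioc_subset_Icc_self).aemeasurable measurableSet_Ioc
    have hf : AEMeasurable (fun s => ENNReal.ofReal (|ur s| ^ c))
        (volume.restrict (Ioc r (2*r))) := by
      apply Measurable.comp_aemeasurable (f := ur)
        (g := fun y : ℝ => ENNReal.ofReal (|y| ^ c)) ?_ hmeas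
      fun_prop
    have hg : AEMeasurable (fun s => ENNReal.ofReal (|ur s| ^ (-c)))
        (volume.restrict (Ioc r (2*r))) := by
      apply Measurable.comp_aemeasurable (f := ur)
        (g := fun y : ℝ => ENNReal.ofReal (|y| ^ (-c))) ?_ hmeas
      fun_prop
    have Hold := ENNReal.lintegral_mul_le_Lp_mul_Lq (volume.restrict (Ioc r (2*r)))
      hconj hf hg
    -- LHS of Hölder
    have hLHS : ∫⁻ s in Ioc r (2*r),
        ((fun s => ENNReal.ofReal (|ur s| ^ c)) * fun s => ENNReal.ofReal (|ur s| ^ (-c))) s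
        = ENNReal.ofReal r := by
      rw [setLIntegral_congr_fun measurableSet_Ioc
        (fun x hx => ?_) (g := fun _ => 1)]
      · rw [setLIntegral_one, Real.volume_Ioc]
        congr 1
        ring
      · have hx0 : ur x ≠ 0 := hne' x (Ioc_subset_Icc_self hx)
        have habs : 0 < |ur x| := abs_pos.mpr hx0
        show ENNReal.ofReal (|ur x| ^ c) * ENNReal.ofReal (|ur x| ^ (-c)) = 1
        rw [← ENNReal.ofReal_mul (Real.rpow_nonneg (abs_nonneg _) _),
          ← Real.rpow_add habs, add_neg_cancel, Real.rpow_zero, ENNReal.ofReal_one]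
    set A : ℝ := ∫ s in Ioc r (2*r), |ur s| ^ p with hAdef
    set B : ℝ := ∫ s in Ioc r (2*r), 1 / (ur s) ^ 2 with hBdef
    have hA0 : 0 ≤ A := setIntegral_nonneg measurableSet_Ioc
      (fun x _ => Real.rpow_nonneg (abs_nonneg _) _)
    have hB0 : 0 ≤ B := setIntegral_nonneg measurableSet_Ioc
      (fun x _ => by positivity)
    have hA : ∫⁻ s in Ioc r (2*r), (ENNReal.ofReal (|ur s| ^ c)) ^ q1
        = ENNReal.ofReal A := by
      rw [hAdef, ofReal_integral_eq_lintegral_ofReal hintp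
        (Filter.Eventually.of_forall fun x => Real.rpow_nonneg (abs_nonneg _) _)]
      refine lintegral_congr fun x => ?_
      rw [ENNReal.ofReal_rpow_of_nonneg (Real.rpow_nonneg (abs_nonneg _) _) hq1pos.le,
        ← Real.rpow_mul (abs_nonneg _)]
      congr 2
      rw [hc, hq1]; field_simp; try ring
    have hBeq : ∫⁻ s in Ioc r (2*r), (ENNReal.ofReal (|ur s| ^ (-c))) ^ q2
        = ENNReal.ofReal B := by
      rw [hBdef, ofReal_integral_eq_lintegral_ofReal hintw
        (Filter.Eventually.of_forall fun x => by positivity)]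
      refine lintegral_congr fun x => ?_
      rw [ENNReal.ofReal_rpow_of_nonneg (Real.rpow_nonneg (abs_nonneg _) _) hq2pos.le,
        ← Real.rpow_mul (abs_nonneg _)]
      congr 1
      rw [show -c * q2 = (-2 : ℝ) by rw [hc, hq2]; field_simp]
      exact abs_rpow_neg_two' _
    rw [hLHS, hA, hBeq] at Hold
    -- to reals
    have hreal : r ≤ A ^ (1/q1) * B ^ (1/q2) := by
      rw [ENNReal.ofReal_rpow_of_nonneg hA0 (by positivity),
        ENNReal.ofReal_rpow_of_nonneg hB0 (by positivity),
        ← ENNReal.ofReal_mul (by positivity)] at Hold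
      exact (ENNReal.ofReal_le_ofReal_iff (by positivity)).mp Hold
    -- bound B
    have hBK : B ≤ K * r ^ ((N:ℝ) - 2 * sN - 1) := by
      have := hint r hr
      rwa [intervalIntegral.integral_of_le hrr] at this
    set KR : ℝ := K * r ^ ((N:ℝ) - 2 * sN - 1) with hKRdef
    have hKR0 : 0 < KR := by rw [hKRdef]; positivity
    have step1 : r ≤ A ^ (1/q1) * KR ^ (1/q2) :=
      le_trans hreal (mul_le_mul_of_nonneg_left
        (Real.rpow_le_rpow hB0 hBK (by positivity)) (Real.rpow_nonneg hA0 _))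
    have step2 : r ^ q1 ≤ A * KR ^ (p/2) := by
      have h := Real.rpow_le_rpow hr0.le step1 hq1pos.le
      rwa [Real.mul_rpow (Real.rpow_nonneg hA0 _) (Real.rpow_nonneg hKR0.le _),
        ← Real.rpow_mul hA0, ← Real.rpow_mul hKR0.le,
        show 1/q1 * q1 = 1 by field_simp; try ring,
        show 1/q2 * q1 = p/2 by rw [hq1, hq2]; field_simp; try ring,
        Real.rpow_one] at h
    have hKRp : 0 < KR ^ (p/2) := Real.rpow_pos_of_pos hKR0 _
    have step3 : r ^ q1 / KR ^ (p/2) ≤ A := (div_le_iff₀ hKRp).mpr step2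
    have hEq : r ^ q1 / KR ^ (p/2)
        = K ^ (-(p/2)) * r ^ (q1 - ((N:ℝ) - 2 * sN - 1) * (p/2)) := by
      rw [hKRdef, Real.mul_rpow hK.le (Real.rpow_nonneg hr0.le _),
        ← Real.rpow_mul hr0.le, Real.rpow_neg hK.le,
        Real.rpow_sub hr0]
      ring
    have hAl : K ^ (-(p/2)) * r ^ (q1 - ((N:ℝ) - 2 * sN - 1) * (p/2)) ≤ A :=
      hEq ▸ step3
    -- compare with the weighted integral
    have hII1 : IntervalIntegrable (fun s => r ^ ((N:ℝ)-1) * |ur s| ^ p) volume r (2*r) := by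
      apply ContinuousOn.intervalIntegrable
      rw [uIcc_of_le hrr]
      exact continuousOn_const.mul (hcontp r hr)
    have hII2 : IntervalIntegrable (fun s => s ^ ((N:ℝ)-1) * |ur s| ^ p) volume r (2*r) := by
      apply ContinuousOn.intervalIntegrable
      rw [uIcc_of_le hrr]
      exact hFcont r hr
    have hmono2 : (∫ s in r..2*r, r ^ ((N:ℝ)-1) * |ur s| ^ p)
        ≤ ∫ s in r..2*r, s ^ ((N:ℝ)-1) * |ur s| ^ p :=
      intervalIntegral.integral_mono_on hrr hII1 hII2 (fun x hx =>
        mul_le_mul_of_nonneg_right (Real.rpow_le_rpow hr0.le hx.1 hNexp)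
          (Real.rpow_nonneg (abs_nonneg _) _))
    have hconst : (∫ s in r..2*r, r ^ ((N:ℝ)-1) * |ur s| ^ p) = r ^ ((N:ℝ)-1) * A := by
      rw [intervalIntegral.integral_const_mul, intervalIntegral.integral_of_le hrr, ← hAdef]
    set γ : ℝ := q1 - ((N:ℝ) - 2 * sN - 1) * (p/2) with hγ
    have hβ2 : 0 ≤ ((N:ℝ) - 1) + γ := by
      rw [hγ, hq1]; nlinarith [hβ]
    have hrβ : (1:ℝ) ≤ r ^ (((N:ℝ) - 1) + γ) := by
      have := Real.rpow_le_rpow_of_exponent_le hr1 hβ2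
      rwa [Real.rpow_zero] at this
    calc K ^ (-p/2) = K ^ (-(p/2)) * 1 := by rw [neg_div, mul_one]
      _ ≤ K ^ (-(p/2)) * r ^ (((N:ℝ) - 1) + γ) :=
          mul_le_mul_of_nonneg_left hrβ (Real.rpow_pos_of_pos hK _).le
      _ = r ^ ((N:ℝ)-1) * (K ^ (-(p/2)) * r ^ γ) := by
          rw [Real.rpow_add hr0]; ring
      _ ≤ r ^ ((N:ℝ)-1) * A :=
          mul_le_mul_of_nonneg_left hAl (Real.rpow_nonneg hr0.le _)
      _ = ∫ s in r..2*r, r ^ ((N:ℝ)-1) * |ur s| ^ p := hconst.symm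
      _ ≤ ∫ s in r..2*r, s ^ ((N:ℝ)-1) * |ur s| ^ p := hmono2
  refine ⟨main, ?_⟩
  have hc0 : (0:ℝ) < K ^ (-p/2) := Real.rpow_pos_of_pos hK _
  have hra : ∀ n : ℕ, a ≤ 2^n * a := fun n =>
    le_mul_of_one_le_left ha0.le (one_le_pow₀ (by norm_num))
  have key : ∀ n : ℕ, ENNReal.ofReal (K ^ (-p/2))
      ≤ ∫⁻ s in Ioc ((2:ℝ)^n * a) ((2:ℝ)^(n+1) * a),
          ENNReal.ofReal (s ^ ((N:ℝ)-1) * |ur s| ^ p) := by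
    intro n
    have hr : a ≤ 2^n * a := hra n
    have hrpos : (0:ℝ) < 2^n * a := lt_of_lt_of_le ha0 hr
    have h2 : (2:ℝ)^(n+1) * a = 2 * (2^n * a) := by ring
    have hrr : (2:ℝ)^n * a ≤ 2 * (2^n * a) := by linarith
    have hnn : 0 ≤ᵐ[volume.restrict (Ioc ((2:ℝ)^n * a) (2 * (2^n * a)))]
        fun s : ℝ => s ^ ((N:ℝ)-1) * |ur s| ^ p := by
      refine (ae_restrict_iff' measurableSet_Ioc).mpr (Filter.Eventually.of_forall
        fun x hx => ?_)
      have hx0 : (0:ℝ) ≤ x := (lt_of_lt_of_le hrpos hx.1.le).le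
      exact mul_nonneg (Real.rpow_nonneg hx0 _) (Real.rpow_nonneg (abs_nonneg _) _)
    rw [h2, ← ofReal_integral_eq_lintegral_ofReal (hFint _ hr) hnn]
    apply ENNReal.ofReal_le_ofReal
    rw [← intervalIntegral.integral_of_le hrr]
    exact main _ hr
  have hmono : Monotone (fun n : ℕ => (2:ℝ)^n * a) := fun m n h =>
    mul_le_mul_of_nonneg_right (pow_le_pow_right₀ (by norm_num) h) ha0.le
  have hdisj : Pairwise (Function.onFun Disjoint
      fun n : ℕ => Ioc ((2:ℝ)^n * a) ((2:ℝ)^(n+1) * a)) := by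
    have h : ∀ m n : ℕ, m < n → Disjoint (Ioc ((2:ℝ)^m * a) ((2:ℝ)^(m+1) * a))
        (Ioc ((2:ℝ)^n * a) ((2:ℝ)^(n+1) * a)) := by
      intro m n hmn
      refine Set.disjoint_left.mpr fun x hx1 hx2 => ?_
      exact absurd hx2.1 (not_lt.mpr (hx1.2.trans (hmono (by omega))))
    intro m n hmn
    rcases hmn.lt_or_gt with hlt | hlt
    · exact h m n hlt
    · exact (h n m hlt).symm
  have hU : (⋃ n : ℕ, Ioc ((2:ℝ)^n * a) ((2:ℝ)^(n+1) * a)) ⊆ Ici a :=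
    iUnion_subset fun n x hx => le_of_lt (lt_of_le_of_lt (hra n) hx.1)
  refine top_unique ?_
  calc (⊤:ENNReal) = ∑' _ : ℕ, ENNReal.ofReal (K ^ (-p/2)) :=
        (ENNReal.tsum_const_eq_top_of_ne_zero (ENNReal.ofReal_pos.mpr hc0).ne').symm
    _ ≤ ∑' n : ℕ, ∫⁻ s in Ioc ((2:ℝ)^n * a) ((2:ℝ)^(n+1) * a),
          ENNReal.ofReal (s ^ ((N:ℝ)-1) * |ur s| ^ p) := ENNReal.tsum_le_tsum key
    _ = ∫⁻ s in ⋃ n : ℕ, Ioc ((2:ℝ)^n * a) ((2:ℝ)^(n+1) * a),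
          ENNReal.ofReal (s ^ ((N:ℝ)-1) * |ur s| ^ p) :=
        (lintegral_iUnion (fun _ => measurableSet_Ioc) hdisj _).symm
    _ ≤ ∫⁻ s in Ici a, ENNReal.ofReal (s ^ ((N:ℝ)-1) * |ur s| ^ p) :=
        lintegral_mono_set hU
end

section
/- Let N ≥ 3, K > 0, N/(N/2 + √(N−1) − 1) < p < 2, and let u : [1,∞) → ℝ be C¹ with ∫_r^{2r} u_r(s)² ds ≤ K · r^{−N − 2√(N−1) + 3} for all r ≥ 1. Then ∫_1^∞ s^{N−1} |u_r(s)|^p ds < ∞. -/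
open Set MeasureTheory intervalIntegral
open scoped ENNReal

theorem dichotomy_stmt12 (N : ℕ) (hN : 3 ≤ N) (K p : ℝ) (hK : 0 < K)
    (hp1 : (N : ℝ) / ((N : ℝ)/2 + Real.sqrt ((N : ℝ) - 1) - 1) < p) (hp2 : p < 2)
    (u ur : ℝ → ℝ)
    (hur : ∀ r : ℝ, 1 ≤ r → HasDerivAt u (ur r) r)
    (hcont : ContinuousOn ur (Ici 1))
    (hint : ∀ r : ℝ, 1 ≤ r →
      (∫ s in r..2*r, (ur s) ^ 2) ≤ K * r ^ (-(N : ℝ) - 2 * Real.sqrt ((N : ℝ) - 1) + 3)) :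
    (∫⁻ s in Ici (1:ℝ), ENNReal.ofReal (s ^ ((N : ℝ) - 1) * |ur s| ^ p)) < ⊤ := by
  have hN3 : (3:ℝ) ≤ (N:ℝ) := by exact_mod_cast hN
  set sq := Real.sqrt ((N:ℝ) - 1) with hsqdef
  have hsq_pos : 0 < sq := Real.sqrt_pos.2 (by linarith)
  have hden : 0 < (N:ℝ)/2 + sq - 1 := by linarith
  have hp0 : 0 < p := lt_trans (div_pos (by linarith) hden) hp1
  set e : ℝ := -(N:ℝ) - 2 * sq + 3 with hedef
  set α : ℝ := (N:ℝ) - p * ((N:ℝ)/2 + sq - 1) with hαdef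
  have hα : α < 0 := by
    have := (div_lt_iff₀ hden).mp hp1
    simp only [hαdef]; linarith
  set C : ℝ := 2 ^ ((N:ℝ)-1) * K ^ (p/2) with hCdef
  have hC : 0 < C := by positivity
  -- conjugate exponents
  have hconj : (2/p).HolderConjugate (2/(2-p)) := by
    constructor
    · rw [inv_div, inv_div, inv_one]; ring
    · exact div_pos two_pos hp0
    · exact div_pos two_pos (by linarith)
  -- the key dyadic estimate
  have key : ∀ r : ℝ, 1 ≤ r →
      (∫⁻ s in Ico r (2*r), ENNReal.ofReal (s ^ ((N:ℝ)-1) * |ur s| ^ p))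
        ≤ ENNReal.ofReal (C * r ^ α) := by
    intro r hr
    have hr0 : 0 < r := lt_of_lt_of_le one_pos hr
    have hsub : Ico r (2*r) ⊆ Ici (1:ℝ) := fun x hx => le_trans hr hx.1
    have hmeas_ur : AEMeasurable ur (volume.restrict (Ico r (2*r))) :=
      (hcont.mono hsub).aemeasurable measurableSet_Ico
    have hmeas_f : AEMeasurable (fun s => ENNReal.ofReal (|ur s| ^ p))
        (volume.restrict (Ico r (2*r))) := by
      refine ENNReal.measurable_ofReal.comp_aemeasurable ?_
      exact (Real.continuous_rpow_const hp0.le).comp continuous_abs |>.measurable.comp_aemeasurable hmeas_ur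
    -- step 1: bound s^(N-1) by (2r)^(N-1)
    have step1 : (∫⁻ s in Ico r (2*r), ENNReal.ofReal (s ^ ((N:ℝ)-1) * |ur s| ^ p))
        ≤ ENNReal.ofReal ((2*r) ^ ((N:ℝ)-1)) *
          ∫⁻ s in Ico r (2*r), ENNReal.ofReal (|ur s| ^ p) := by
      rw [← lintegral_const_mul' _ _ ENNReal.ofReal_ne_top]
      refine setLIntegral_mono' measurableSet_Ico fun s hs => ?_
      rw [ENNReal.ofReal_mul (Real.rpow_nonneg (by linarith [hs.1]) _)]
      exact mul_le_mul_left (ENNReal.ofReal_le_ofReal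
        (Real.rpow_le_rpow (by linarith [hs.1]) hs.2.le (by linarith))) _
    -- step 2: Hölder
    have step2 : (∫⁻ s in Ico r (2*r), ENNReal.ofReal (|ur s| ^ p))
        ≤ (∫⁻ s in Ico r (2*r), ENNReal.ofReal (|ur s| ^ p) ^ (2/p)) ^ (p/2) *
          (volume (Ico r (2*r))) ^ (1 - p/2) := by
      have h := ENNReal.lintegral_mul_le_Lp_mul_Lq (volume.restrict (Ico r (2*r)))
        hconj hmeas_f (aemeasurable_const (b := (1:ℝ≥0∞)))
      simp only [Pi.mul_apply, mul_one, ENNReal.one_rpow, lintegral_const,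
        Measure.restrict_apply MeasurableSet.univ, univ_inter, one_mul] at h
      have e1 : 1/(2/p) = p/2 := by rw [one_div_div]
      have e2 : 1/(2/(2-p)) = 1 - p/2 := by rw [one_div_div]; ring
      rwa [e1, e2] at h
    -- rewrite |ur|^p ^ (2/p) as ur^2
    have hrw : ∀ s : ℝ, ENNReal.ofReal (|ur s| ^ p) ^ (2/p) = ENNReal.ofReal (ur s ^ 2) := by
      intro s
      rw [ENNReal.ofReal_rpow_of_nonneg (Real.rpow_nonneg (abs_nonneg (ur s)) p)
          (div_nonneg (by norm_num) hp0.le), ← Real.rpow_mul (abs_nonneg _)]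
      congr 1
      have hpe : p * (2/p) = ((2:ℕ):ℝ) := by push_cast; field_simp
      rw [hpe, Real.rpow_natCast, sq_abs]
    simp only [hrw] at step2
    -- step 3: evaluate the L² integral
    have hIoc : (∫ s in Ico r (2*r), ur s ^ 2) = ∫ s in r..(2*r), ur s ^ 2 := by
      rw [intervalIntegral.integral_of_le (by linarith), integral_Ico_eq_integral_Ioo,
        integral_Ioc_eq_integral_Ioo]
    have hcont2 : ContinuousOn (fun s => ur s ^ 2) (Ico r (2*r)) :=
      (hcont.mono hsub).pow 2
    have hinteg : IntegrableOn (fun s => ur s ^ 2) (Ico r (2*r)) := by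
      refine ((hcont.mono (fun x hx => le_trans hr hx.1 : Icc r (2*r) ⊆ Ici 1)).pow
        2).integrableOn_Icc.mono_set Ico_subset_Icc_self
    have step3 : (∫⁻ s in Ico r (2*r), ENNReal.ofReal (ur s ^ 2))
        ≤ ENNReal.ofReal (K * r ^ e) := by
      rw [← ofReal_integral_eq_lintegral_ofReal hinteg
        (Filter.Eventually.of_forall fun s => sq_nonneg _)]
      exact ENNReal.ofReal_le_ofReal (by rw [hIoc]; exact hint r hr)
    -- combine
    have hvol : volume (Ico r (2*r)) = ENNReal.ofReal r := by
      rw [Real.volume_Ico]; congr 1; ring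
    calc (∫⁻ s in Ico r (2*r), ENNReal.ofReal (s ^ ((N:ℝ)-1) * |ur s| ^ p))
        ≤ ENNReal.ofReal ((2*r) ^ ((N:ℝ)-1)) *
          ((∫⁻ s in Ico r (2*r), ENNReal.ofReal (ur s ^ 2)) ^ (p/2) *
            (volume (Ico r (2*r))) ^ (1 - p/2)) := by
          exact le_trans step1 (mul_le_mul_right step2 _)
      _ ≤ ENNReal.ofReal ((2*r) ^ ((N:ℝ)-1)) *
          (ENNReal.ofReal (K * r ^ e) ^ (p/2) * ENNReal.ofReal r ^ (1 - p/2)) := by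
          rw [hvol]; gcongr
      _ = ENNReal.ofReal ((2*r) ^ ((N:ℝ)-1) * ((K * r ^ e) ^ (p/2) * r ^ (1 - p/2))) := by
          rw [ENNReal.ofReal_rpow_of_nonneg
              (mul_nonneg hK.le (Real.rpow_nonneg hr0.le e)) (by linarith : (0:ℝ) ≤ p/2),
            ENNReal.ofReal_rpow_of_nonneg hr0.le (by linarith : (0:ℝ) ≤ 1 - p/2),
            ← ENNReal.ofReal_mul (Real.rpow_nonneg
              (mul_nonneg hK.le (Real.rpow_nonneg hr0.le e)) _),
            ← ENNReal.ofReal_mul (Real.rpow_nonneg (by linarith : (0:ℝ) ≤ 2*r) _)]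
      _ = ENNReal.ofReal (C * r ^ α) := by
          congr 1
          rw [Real.mul_rpow (by norm_num) hr0.le, Real.mul_rpow hK.le (Real.rpow_nonneg hr0.le _),
            ← Real.rpow_mul hr0.le, hCdef]
          rw [show (2:ℝ) ^ ((N:ℝ)-1) * r ^ ((N:ℝ)-1) * (K ^ (p/2) * r ^ (e*(p/2)) * r ^ (1-p/2))
              = 2 ^ ((N:ℝ)-1) * K ^ (p/2) * (r ^ ((N:ℝ)-1) * r ^ (e*(p/2)) * r ^ (1-p/2)) by ring]
          congr 1
          rw [← Real.rpow_add hr0, ← Real.rpow_add hr0]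
          congr 1
          simp only [hαdef, hedef]; ring
  -- dyadic decomposition of Ici 1
  have hunion : Ici (1:ℝ) = ⋃ j : ℕ, Ico ((2:ℝ)^j) (2 * (2:ℝ)^j) := by
    ext x
    simp only [mem_Ici, mem_iUnion, mem_Ico]
    constructor
    · intro hx
      refine ⟨⌊Real.logb 2 x⌋₊, ?_, ?_⟩
      · calc (2:ℝ)^(⌊Real.logb 2 x⌋₊) = (2:ℝ) ^ ((⌊Real.logb 2 x⌋₊ : ℝ)) := by
              rw [Real.rpow_natCast]
          _ ≤ (2:ℝ) ^ (Real.logb 2 x) := by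
              apply Real.rpow_le_rpow_of_exponent_le one_le_two
              exact Nat.floor_le (Real.logb_nonneg one_lt_two hx)
          _ = x := Real.rpow_logb two_pos (by norm_num) (by linarith)
      · calc x = (2:ℝ) ^ (Real.logb 2 x) :=
              (Real.rpow_logb two_pos (by norm_num) (by linarith)).symm
          _ < (2:ℝ) ^ ((⌊Real.logb 2 x⌋₊ : ℝ) + 1) := by
              apply Real.rpow_lt_rpow_of_exponent_lt one_lt_two
              exact Nat.lt_floor_add_one _
          _ = 2 * (2:ℝ)^(⌊Real.logb 2 x⌋₊) := by
              rw [Real.rpow_add two_pos, Real.rpow_natCast, Real.rpow_one]; ring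
    · rintro ⟨j, h1, _⟩
      exact le_trans (one_le_pow₀ one_le_two) h1
  have hdisj : Pairwise (Function.onFun Disjoint fun j : ℕ => Ico ((2:ℝ)^j) (2 * (2:ℝ)^j)) := by
    have hkey : ∀ i j : ℕ, i < j →
        Disjoint (Ico ((2:ℝ)^i) (2 * (2:ℝ)^i)) (Ico ((2:ℝ)^j) (2 * (2:ℝ)^j)) := by
      intro i j hij
      apply Set.disjoint_left.mpr
      rintro x ⟨_, hx2⟩ ⟨hx3, _⟩
      have : (2:ℝ) * 2^i ≤ 2^j := by
        calc (2:ℝ) * 2^i = 2^(i+1) := by ring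
          _ ≤ 2^j := pow_le_pow_right₀ one_le_two hij
      linarith
    intro i j hij
    rcases lt_or_gt_of_ne hij with h | h
    · exact hkey i j h
    · exact (hkey j i h).symm
  rw [hunion, lintegral_iUnion (fun j => measurableSet_Ico) hdisj]
  have hbound : ∀ j : ℕ, (∫⁻ s in Ico ((2:ℝ)^j) (2 * (2:ℝ)^j),
      ENNReal.ofReal (s ^ ((N:ℝ)-1) * |ur s| ^ p))
      ≤ ENNReal.ofReal C * ENNReal.ofReal ((2:ℝ)^α) ^ j := by
    intro j
    refine le_trans (key ((2:ℝ)^j) (one_le_pow₀ one_le_two)) (le_of_eq ?_)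
    rw [← ENNReal.ofReal_pow (Real.rpow_nonneg (by norm_num) _),
      ← ENNReal.ofReal_mul hC.le]
    congr 1
    congr 1
    rw [← Real.rpow_natCast ((2:ℝ)^α) j, ← Real.rpow_natCast (2:ℝ) j,
      ← Real.rpow_mul (by norm_num), ← Real.rpow_mul (by norm_num), mul_comm]
  refine lt_of_le_of_lt (ENNReal.tsum_le_tsum hbound) ?_
  rw [ENNReal.tsum_mul_left, ENNReal.tsum_geometric]
  have h2α : ENNReal.ofReal ((2:ℝ)^α) < 1 := by
    rw [← ENNReal.ofReal_one]
    exact ENNReal.ofReal_lt_ofReal_iff_of_nonneg (Real.rpow_nonneg (by norm_num) _) |>.mpr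
      (Real.rpow_lt_one_of_one_lt_of_neg one_lt_two hα)
  refine ENNReal.mul_lt_top ENNReal.ofReal_lt_top ?_
  rw [ENNReal.inv_lt_top]
  exact tsub_pos_of_lt h2α
end

section
/- Let N ≥ 2, R₁ ≥ 1, a > R₁, and let u : [R₁,∞) → ℝ be C¹ with u_r never zero on [a,∞) and ∫_{R₁}^a t^{N−3} u_r(t)² dt > 0. Suppose that for every R₂ > R₁ and every Lipschitz η on [R₁,R₂] with η(R₂) = 0 one has ∫_{R₁}^{R₂} t^{N−1} u_r(t)² (η'(t)² − (N−1)/t² · η(t)²) dt ≥ 0. Then there exists K > 0 such that ∫_r^{2r} ds/u_r(s)² ≤ K · r^{N − 2√(N−1) − 1} for all r ≥ a. -/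
open Set MeasureTheory intervalIntegral

-- helper: interval integrability transfer along exact equality on uIoc
private lemma II.congrOn {f g : ℝ → ℝ} {p q : ℝ} (hf : IntervalIntegrable f MeasureTheory.volume p q)
    (heq : Set.EqOn f g (Set.uIoc p q)) : IntervalIntegrable g MeasureTheory.volume p q :=
  hf.congr heq

set_option maxHeartbeats 1000000 in
theorem dichotomy_stmt14 (N : ℕ) (hN : 2 ≤ N) (R₁ a : ℝ) (hR₁ : 1 ≤ R₁) (haR : R₁ < a)
    (u ur : ℝ → ℝ)
    (hur : ∀ t : ℝ, R₁ ≤ t → HasDerivAt u (ur t) t)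
    (hcont : ContinuousOn ur (Ici R₁))
    (hne : ∀ s : ℝ, a ≤ s → ur s ≠ 0)
    (hpos : 0 < ∫ t in R₁..a, t ^ ((N : ℝ) - 3) * (ur t) ^ 2)
    (hHL : ∀ R₂ : ℝ, R₁ < R₂ →
      ∀ (C : NNReal) (η : ℝ → ℝ), LipschitzOnWith C η (Icc R₁ R₂) → η R₂ = 0 →
        0 ≤ ∫ t in R₁..R₂, t ^ ((N : ℝ) - 1) * (ur t) ^ 2 *
              ((deriv η t) ^ 2 - ((N : ℝ) - 1) / t ^ 2 * (η t) ^ 2)) :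
    ∃ K > 0, ∀ r : ℝ, a ≤ r →
      (∫ s in r..2*r, 1 / (ur s) ^ 2) ≤ K * r ^ ((N : ℝ) - 2 * Real.sqrt ((N : ℝ) - 1) - 1) := by
  have hN1 : (1:ℝ) ≤ (N:ℝ) - 1 := by
    have : (2:ℝ) ≤ (N:ℝ) := by exact_mod_cast hN
    linarith
  set β : ℝ := Real.sqrt ((N:ℝ) - 1) with hβdef
  have hβ1 : 1 ≤ β := by
    rw [hβdef]
    have h1 : Real.sqrt 1 ≤ Real.sqrt ((N:ℝ)-1) := Real.sqrt_le_sqrt hN1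
    simpa using h1
  have hβ0 : 0 < β := by linarith
  have hβsq : β * β = (N:ℝ) - 1 := Real.mul_self_sqrt (by linarith)
  have h0R : (0:ℝ) < R₁ := by linarith
  have ha0 : (0:ℝ) < a := by linarith
  set E : ℝ := ((N:ℝ) - 1) * (a ^ (-β)) ^ 2 with hEdef
  have hE : 0 < E := by
    have := Real.rpow_pos_of_pos ha0 (-β)
    have h1 : (0:ℝ) < (N:ℝ) - 1 := by linarith
    positivity
  set c : ℝ := E * ∫ t in R₁..a, t ^ ((N : ℝ) - 3) * (ur t) ^ 2 with hcdef
  have hc : 0 < c := mul_pos hE hpos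
  refine ⟨2 ^ ((N:ℝ) - 1) / c, by positivity, ?_⟩
  intro r hr
  -- basic facts about r
  have h0r : (0:ℝ) < r := lt_of_lt_of_le ha0 hr
  have h1r : (1:ℝ) ≤ r := by linarith
  have hrr : r < 2 * r := by linarith
  have haR2 : a < 2 * r := lt_of_le_of_lt hr hrr
  have hR2 : R₁ < 2 * r := lt_trans haR haR2
  have hRa : R₁ ≤ a := le_of_lt haR
  have har : a ≤ r := hr
  -- the function g
  set g : ℝ → ℝ := fun s => 1 / (ur s) ^ 2 with hgdef
  have hgcont : ContinuousOn g (Ici a) := by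
    apply ContinuousOn.div continuousOn_const
    · exact ((hcont.mono (Ici_subset_Ici.2 hRa)).pow 2)
    · intro x hx
      exact pow_ne_zero 2 (hne x hx)
  have hgpos : ∀ s, a ≤ s → 0 < g s := by
    intro s hs
    have := hne s hs
    rw [hgdef]
    positivity
  have hgInt : IntervalIntegrable g MeasureTheory.volume r (2*r) := by
    apply ContinuousOn.intervalIntegrable
    apply hgcont.mono
    rw [uIcc_of_le (le_of_lt hrr)]
    exact fun x hx => le_trans har hx.1
  set Ir : ℝ := ∫ s in r..2*r, g s with hIrdef
  have hIr : 0 < Ir := by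
    apply intervalIntegral.intervalIntegral_pos_of_pos_on hgInt _ hrr
    intro x hx
    exact hgpos x (le_trans har (le_of_lt hx.1))
  set kr : ℝ := r ^ (-β) / Ir with hkrdef
  have hkr : 0 < kr := div_pos (Real.rpow_pos_of_pos h0r _) hIr
  -- the piecewise derivative function
  set h : ℝ → ℝ := fun t => if t ≤ a then 0 else if t ≤ r then -β * t ^ (-β - 1)
    else if t ≤ 2*r then -(kr * g t) else 0 with hhdef
  -- eta
  set η : ℝ → ℝ := fun t => a ^ (-β) + ∫ s in R₁..t, h s with hηdef
  -- integrability of h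
  have hcont2 : ContinuousOn (fun s : ℝ => -β * s ^ (-β - 1)) (Icc a r) := by
    apply ContinuousOn.mul continuousOn_const
    apply ContinuousOn.rpow_const continuousOn_id
    intro x hx
    exact Or.inl (ne_of_gt (lt_of_lt_of_le ha0 hx.1))
  have hcont3 : ContinuousOn (fun s : ℝ => -(kr * g s)) (Icc r (2*r)) :=
    (continuousOn_const.mul (hgcont.mono fun x hx => le_trans har hx.1)).neg
  have hIntOn : IntegrableOn h (Icc R₁ (2*r)) MeasureTheory.volume := by
    have cover : Icc R₁ (2*r) ⊆ Icc R₁ a ∪ (Ioc a r ∪ Ioc r (2*r)) := by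
      intro x hx
      rcases le_or_gt x a with h1 | h1
      · exact Or.inl ⟨hx.1, h1⟩
      · rcases le_or_gt x r with h2 | h2
        · exact Or.inr (Or.inl ⟨h1, h2⟩)
        · exact Or.inr (Or.inr ⟨h2, hx.2⟩)
    have p1 : IntegrableOn h (Icc R₁ a) MeasureTheory.volume := by
      apply IntegrableOn.congr_fun (f := fun _ : ℝ => (0:ℝ)) ?_ ?_ measurableSet_Icc
      · exact integrableOn_const measure_Icc_lt_top.ne
      · intro x hx
        simp only [hhdef]
        rw [if_pos hx.2]
    have p2 : IntegrableOn h (Ioc a r) MeasureTheory.volume := by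
      apply IntegrableOn.congr_fun (f := fun s : ℝ => -β * s ^ (-β - 1)) ?_ ?_ measurableSet_Ioc
      · exact (hcont2.integrableOn_Icc).mono_set Ioc_subset_Icc_self
      · intro x hx
        simp only [hhdef]
        rw [if_neg (not_le.2 hx.1), if_pos hx.2]
    have p3 : IntegrableOn h (Ioc r (2*r)) MeasureTheory.volume := by
      apply IntegrableOn.congr_fun (f := fun s : ℝ => -(kr * g s)) ?_ ?_ measurableSet_Ioc
      · exact (hcont3.integrableOn_Icc).mono_set Ioc_subset_Icc_self
      · intro x hx
        have hax : a < x := lt_of_le_of_lt har hx.1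
        simp only [hhdef]
        rw [if_neg (not_le.2 hax), if_neg (not_le.2 hx.1), if_pos hx.2]
    exact (p1.union (p2.union p3)).mono_set cover
    
  have hII : ∀ p q : ℝ, p ∈ Icc R₁ (2*r) → q ∈ Icc R₁ (2*r) →
      IntervalIntegrable h MeasureTheory.volume p q := by
    intro p q hp hq
    rw [intervalIntegrable_iff]
    apply hIntOn.mono_set
    intro x hx
    rcases Set.mem_uIoc.1 hx with h' | h'
    · exact ⟨le_trans hp.1 (le_of_lt h'.1), le_trans h'.2 hq.2⟩
    · exact ⟨le_trans hq.1 (le_of_lt h'.1), le_trans h'.2 hp.2⟩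
  -- values of η
  have hηval1 : ∀ t ∈ Icc R₁ a, η t = a ^ (-β) := by
    intro t ht
    have hz : (∫ s in R₁..t, h s) = ∫ s in R₁..t, (0:ℝ) := by
      apply intervalIntegral.integral_congr
      intro s hs
      rw [uIcc_of_le ht.1] at hs
      simp only [hhdef]
      rw [if_pos (le_trans hs.2 ht.2)]
    simp only [hηdef]
    rw [hz]
    simp
  have hηint2 : ∀ t ∈ Icc a r, (∫ s in a..t, h s) = t ^ (-β) - a ^ (-β) := by
    intro t ht
    have he : (∫ s in a..t, h s) = ∫ s in a..t, -β * s ^ (-β - 1) := by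
      apply intervalIntegral.integral_congr_ae
      apply Filter.Eventually.of_forall
      intro s hs
      rw [Set.uIoc_of_le ht.1] at hs
      simp only [hhdef]
      rw [if_neg (not_le.2 hs.1), if_pos (le_trans hs.2 ht.2)]
    rw [he]
    have hFTC := intervalIntegral.integral_eq_sub_of_hasDerivAt
      (f := fun s : ℝ => s ^ (-β)) (f' := fun s : ℝ => -β * s ^ (-β - 1))
      (a := a) (b := t) ?_ ?_
    · rw [hFTC]
    · intro x hx
      rw [uIcc_of_le ht.1] at hx
      have hx0 : (0:ℝ) < x := lt_of_lt_of_le ha0 hx.1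
      have := Real.hasDerivAt_rpow_const (x := x) (p := -β) (Or.inl hx0.ne')
      convert this using 1
    · apply ContinuousOn.intervalIntegrable
      apply ContinuousOn.mul continuousOn_const
      apply ContinuousOn.rpow_const continuousOn_id
      intro x hx
      rw [uIcc_of_le ht.1] at hx
      exact Or.inl (ne_of_gt (lt_of_lt_of_le ha0 hx.1))
  have hηval2 : ∀ t ∈ Icc a r, η t = t ^ (-β) := by
    intro t ht
    have h1 : (∫ s in R₁..a, h s) = 0 := by
      have := hηval1 a ⟨hRa, le_refl a⟩
      simp only [hηdef] at this
      linarith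
    have hmem_t : t ∈ Icc R₁ (2*r) := ⟨le_trans hRa ht.1, le_trans ht.2 hrr.le⟩
    simp only [hηdef]
    rw [← intervalIntegral.integral_add_adjacent_intervals
      (hII R₁ a ⟨le_refl _, hR2.le⟩ ⟨hRa, haR2.le⟩)
      (hII a t ⟨hRa, haR2.le⟩ hmem_t), h1, hηint2 t ht]
    ring
  have hηint3 : (∫ s in r..2*r, h s) = -(kr * Ir) := by
    have he : (∫ s in r..2*r, h s) = ∫ s in r..2*r, (-kr) * g s := by
      apply intervalIntegral.integral_congr_ae
      apply Filter.Eventually.of_forall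
      intro s hs
      rw [Set.uIoc_of_le hrr.le] at hs
      have has : a < s := lt_of_le_of_lt har hs.1
      simp only [hhdef]
      rw [if_neg (not_le.2 has), if_neg (not_le.2 hs.1), if_pos hs.2]
      ring
    rw [he, intervalIntegral.integral_const_mul, ← hIrdef]
    ring
  have hη2r : η (2*r) = 0 := by
    have h1 : (∫ s in R₁..r, h s) = r ^ (-β) - a ^ (-β) := by
      have := hηval2 r ⟨har, le_refl r⟩
      simp only [hηdef] at this
      linarith
    have h2 : kr * Ir = r ^ (-β) := by
      rw [hkrdef]
      field_simp
    simp only [hηdef]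
    rw [← intervalIntegral.integral_add_adjacent_intervals
      (hII R₁ r ⟨le_refl _, hR2.le⟩ ⟨le_trans hRa har, hrr.le⟩)
      (hII r (2*r) ⟨le_trans hRa har, hrr.le⟩ ⟨hR2.le, le_refl _⟩), h1, hηint3, h2]
    ring
  have hηcont : ContinuousOn η (Icc R₁ (2*r)) := by
    simp only [hηdef]
    apply ContinuousOn.add continuousOn_const
    have h1 : IntegrableOn h (uIcc R₁ (2*r)) MeasureTheory.volume := by
      rwa [uIcc_of_le hR2.le]
    have := intervalIntegral.continuousOn_primitive_interval (f := h)
      (μ := MeasureTheory.volume) (a := R₁) (b := 2*r) h1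
    rwa [uIcc_of_le hR2.le] at this
  -- Lipschitz
  obtain ⟨C, hLip⟩ : ∃ C : NNReal, LipschitzOnWith C η (Icc R₁ (2*r)) := by
    obtain ⟨Mg, hMg⟩ := (isCompact_Icc (a := r) (b := 2*r)).exists_bound_of_continuousOn
      (hgcont.mono fun x hx => le_trans har hx.1)
    have hMg0 : (0:ℝ) ≤ Mg := le_trans (norm_nonneg _) (hMg r ⟨le_refl r, hrr.le⟩)
    set M : ℝ := β + kr * Mg with hMdef
    have hM0 : 0 ≤ M := by positivity
    have hbound : ∀ t : ℝ, ‖h t‖ ≤ M := by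
      intro t
      simp only [hhdef]
      split_ifs with h1 h2 h3
      · simp only [norm_zero]
        positivity
      · have h1t : (1:ℝ) ≤ t := by
          push_neg at h1
          linarith
        have hrp : t ^ (-β - 1) ≤ 1 :=
          Real.rpow_le_one_of_one_le_of_nonpos h1t (by linarith)
        have hrp0 : (0:ℝ) ≤ t ^ (-β - 1) := Real.rpow_nonneg (by linarith) _
        rw [Real.norm_eq_abs, abs_mul, abs_neg, abs_of_pos hβ0, abs_of_nonneg hrp0]
        nlinarith [mul_nonneg hkr.le hMg0]
      · push_neg at h1 h2
        have ht : t ∈ Icc r (2*r) := ⟨h2.le, h3⟩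
        have := hMg t ht
        rw [Real.norm_eq_abs, abs_neg, abs_mul, abs_of_pos hkr]
        rw [Real.norm_eq_abs] at this
        nlinarith [hkr.le, hMg0]
      · simp only [norm_zero]
        positivity
    refine ⟨M.toNNReal, LipschitzOnWith.of_dist_le_mul fun x hx y hy => ?_⟩
    rw [Real.coe_toNNReal M hM0]
    have hIx : IntervalIntegrable h MeasureTheory.volume R₁ x := hII R₁ x ⟨le_refl _, hR2.le⟩ hx
    have hIy : IntervalIntegrable h MeasureTheory.volume R₁ y := hII R₁ y ⟨le_refl _, hR2.le⟩ hy
    have hdiff : η x - η y = ∫ s in y..x, h s := by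
      simp only [hηdef]
      rw [← intervalIntegral.integral_interval_sub_left hIx hIy]
      ring
    rw [Real.dist_eq, Real.dist_eq, hdiff]
    have := intervalIntegral.norm_integral_le_of_norm_le_const
      (C := M) (f := h) (a := y) (b := x) (fun s _ => hbound s)
    rw [Real.norm_eq_abs] at this
    calc |∫ s in y..x, h s| ≤ M * |x - y| := this
      _ = M * dist x y := by rw [Real.dist_eq]
  -- derivative of η
  have hderiv : ∀ t ∈ Ioo R₁ (2*r), t ≠ a → t ≠ r → HasDerivAt η (h t) t := by
    intro t ht hta htr
    rcases lt_trichotomy t a with h1 | h1 | h1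
    · -- t < a : locally constant
      have heq : η =ᶠ[nhds t] fun _ => a ^ (-β) := by
        filter_upwards [Ioo_mem_nhds ht.1 h1] with s hs
        exact hηval1 s ⟨hs.1.le, hs.2.le⟩
      have hht : h t = 0 := by
        simp only [hhdef]
        rw [if_pos h1.le]
      rw [hht]
      exact (hasDerivAt_const t _).congr_of_eventuallyEq heq
    · exact absurd h1 hta
    · rcases lt_trichotomy t r with h2 | h2 | h2
      · -- a < t < r
        have ht0 : (0:ℝ) < t := lt_trans ha0 h1
        have hd0 : HasDerivAt (fun s : ℝ => s ^ (-β)) (-β * t ^ (-β - 1)) t :=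
          Real.hasDerivAt_rpow_const (x := t) (p := -β) (Or.inl ht0.ne')
        have heq : η =ᶠ[nhds t] fun s => s ^ (-β) := by
          filter_upwards [Ioo_mem_nhds h1 h2] with s hs
          exact hηval2 s ⟨hs.1.le, hs.2.le⟩
        have hht : h t = -β * t ^ (-β - 1) := by
          simp only [hhdef]
          rw [if_neg (not_le.2 h1), if_pos h2.le]
        rw [hht]
        exact hd0.congr_of_eventuallyEq heq
      · exact absurd h2 htr
      · -- r < t < 2r
        have hrmem : r ∈ Icc R₁ (2*r) := ⟨le_trans hRa har, hrr.le⟩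
        have htmem : t ∈ Icc R₁ (2*r) := ⟨ht.1.le, ht.2.le⟩
        have hIrt : IntervalIntegrable h MeasureTheory.volume r t := hII r t hrmem htmem
        have hcg : ContinuousAt g t := by
          have hcur : ContinuousAt ur t :=
            hcont.continuousAt (Ici_mem_nhds (lt_trans haR (lt_of_le_of_lt har h2)))
          have hne' : ur t ≠ 0 := hne t (le_trans har h2.le)
          exact ContinuousAt.div continuousAt_const (hcur.pow 2) (pow_ne_zero 2 hne')
        have hloceq : ∀ s ∈ Ioo r (2*r), h s = -(kr * g s) := by
          intro s hs
          have has : a < s := lt_of_le_of_lt har hs.1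
          simp only [hhdef]
          rw [if_neg (not_le.2 has), if_neg (not_le.2 hs.1), if_pos hs.2.le]
        have hch : ContinuousAt h t := by
          have heq : (fun s => -(kr * g s)) =ᶠ[nhds t] h := by
            filter_upwards [Ioo_mem_nhds h2 ht.2] with s hs
            exact (hloceq s hs).symm
          exact ContinuousAt.congr ((continuousAt_const.mul hcg).neg) heq
        have hmeas : StronglyMeasurableAtFilter h (nhds t) MeasureTheory.volume := by
          refine ⟨Ioo r (2*r), Ioo_mem_nhds h2 ht.2, ?_⟩
          have hcont' : ContinuousOn (fun s => -(kr * g s)) (Ioo r (2*r)) :=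
            (continuousOn_const.mul (hgcont.mono fun x hx => le_trans har hx.1.le)).neg
          apply (hcont'.aestronglyMeasurable measurableSet_Ioo).congr
          exact (MeasureTheory.ae_restrict_iff' measurableSet_Ioo).2
            (Filter.Eventually.of_forall fun s hs => (hloceq s hs).symm)
        have hdI : HasDerivAt (fun x => ∫ s in r..x, h s) (h t) t :=
          intervalIntegral.integral_hasDerivAt_right hIrt hmeas hch
        have heq : η =ᶠ[nhds t]
            fun x => (a ^ (-β) + ∫ s in R₁..r, h s) + ∫ s in r..x, h s := by
          filter_upwards [Ioo_mem_nhds h2 ht.2] with s hs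
          have hsmem : s ∈ Icc R₁ (2*r) := ⟨le_trans hRa (le_trans har hs.1.le), hs.2.le⟩
          simp only [hηdef]
          rw [← intervalIntegral.integral_add_adjacent_intervals
            (hII R₁ r ⟨le_refl _, hR2.le⟩ hrmem) (hII r s hrmem hsmem)]
          ring
        exact (hdI.const_add _).congr_of_eventuallyEq heq
  -- apply the hypothesis
  have hQ := hHL (2*r) hR2 C η hLip hη2r
  set Φ : ℝ → ℝ := fun t => t ^ ((N : ℝ) - 1) * (ur t) ^ 2 *
      ((h t) ^ 2 - ((N : ℝ) - 1) / t ^ 2 * (η t) ^ 2) with hΦdef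
  have hQΦ : (0:ℝ) ≤ ∫ t in R₁..2*r, Φ t := by
    have hnull : ∀ᵐ t : ℝ, t ∉ ({a, r, 2*r} : Set ℝ) := by
      have hz : MeasureTheory.volume ({a, r, 2*r} : Set ℝ) = 0 :=
        (Set.toFinite _).measure_zero _
      exact (MeasureTheory.measure_eq_zero_iff_ae_notMem).1 hz
    have hae : ∀ᵐ t : ℝ, t ∈ Set.uIoc R₁ (2*r) →
        (t ^ ((N : ℝ) - 1) * (ur t) ^ 2 *
          ((deriv η t) ^ 2 - ((N : ℝ) - 1) / t ^ 2 * (η t) ^ 2)) = Φ t := by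
      filter_upwards [hnull] with t hnt hmem
      rw [Set.uIoc_of_le hR2.le] at hmem
      have hta : t ≠ a := fun e => hnt (by simp [e])
      have htr : t ≠ r := fun e => hnt (by simp [e])
      have ht2 : t ≠ 2*r := fun e => hnt (by simp [e])
      have htlt : t < 2*r := lt_of_le_of_ne hmem.2 ht2
      have hd := (hderiv t ⟨hmem.1, htlt⟩ hta htr).deriv
      simp only [hΦdef]
      rw [hd]
    rwa [intervalIntegral.integral_congr_ae hae] at hQ
  -- piece integrals
  -- piece 1 analysis
  set Φ₁ : ℝ → ℝ := fun t => t ^ ((N : ℝ) - 1) * (ur t) ^ 2 *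
      ((0:ℝ) ^ 2 - ((N : ℝ) - 1) / t ^ 2 * (a ^ (-β)) ^ 2) with hΦ₁def
  have hΦ₁cont : ContinuousOn Φ₁ (Icc R₁ a) := by
    apply ContinuousOn.mul
    · exact ContinuousOn.mul
        (ContinuousOn.rpow_const continuousOn_id fun x hx =>
          Or.inl (ne_of_gt (lt_of_lt_of_le h0R hx.1)))
        ((hcont.mono fun x hx => hx.1).pow 2)
    · apply ContinuousOn.sub continuousOn_const
      apply ContinuousOn.mul ?_ continuousOn_const
      apply ContinuousOn.div continuousOn_const (continuousOn_id.pow 2)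
      intro x hx
      exact pow_ne_zero 2 (ne_of_gt (lt_of_lt_of_le h0R hx.1))
  have hΦeq1 : Set.EqOn Φ Φ₁ (Icc R₁ a) := by
    intro x hx
    have hh : h x = 0 := by
      simp only [hhdef]
      rw [if_pos hx.2]
    simp only [hΦdef, hΦ₁def]
    rw [hh, hηval1 x hx]
  have hint1 : IntervalIntegrable Φ MeasureTheory.volume R₁ a := by
    apply II.congrOn ((hΦ₁cont.mono (by rw [uIcc_of_le hRa])).intervalIntegrable)
    intro x hx
    rw [Set.uIoc_of_le hRa] at hx
    exact (hΦeq1 (Ioc_subset_Icc_self hx)).symm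
  -- piece 2: the integrand vanishes
  have hΦzero : ∀ x ∈ Ioc a r, Φ x = 0 := by
    intro x hx
    have hx0 : (0:ℝ) < x := lt_trans ha0 hx.1
    have hh : h x = -β * x ^ (-β - 1) := by
      simp only [hhdef]
      rw [if_neg (not_le.2 hx.1), if_pos hx.2]
    have hη : η x = x ^ (-β) := hηval2 x ⟨hx.1.le, hx.2⟩
    have e0 : x ^ (-β - 1) = x ^ (-β) / x := by
      rw [Real.rpow_sub hx0, Real.rpow_one]
    have hb2 : β ^ 2 = (N:ℝ) - 1 := by rw [sq]; exact hβsq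
    have key : (h x) ^ 2 - ((N : ℝ) - 1) / x ^ 2 * (η x) ^ 2 = 0 := by
      rw [hh, hη, e0, ← hb2]
      field_simp
      ring
    simp only [hΦdef]
    rw [show ((h x) ^ 2 - ((N : ℝ) - 1) / x ^ 2 * (η x) ^ 2) = 0 from key]
    ring
  have hint2 : IntervalIntegrable Φ MeasureTheory.volume a r := by
    apply II.congrOn (_root_.intervalIntegrable_const (c := (0:ℝ)))
    intro x hx
    rw [Set.uIoc_of_le har] at hx
    exact (hΦzero x hx).symm
  -- piece 3
  set Φ₃ : ℝ → ℝ := fun t => t ^ ((N : ℝ) - 1) * (ur t) ^ 2 *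
      ((kr * g t) ^ 2 - ((N : ℝ) - 1) / t ^ 2 * (η t) ^ 2) with hΦ₃def
  have hΦ₃cont : ContinuousOn Φ₃ (Icc r (2*r)) := by
    have hsub : Icc r (2*r) ⊆ Icc R₁ (2*r) := fun x hx =>
      ⟨le_trans hRa (le_trans har hx.1), hx.2⟩
    apply ContinuousOn.mul
    · exact ContinuousOn.mul
        (ContinuousOn.rpow_const continuousOn_id fun x hx =>
          Or.inl (ne_of_gt (lt_of_lt_of_le h0r hx.1)))
        ((hcont.mono fun x hx => le_trans hRa (le_trans har hx.1)).pow 2)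
    · apply ContinuousOn.sub
      · exact ((continuousOn_const.mul (hgcont.mono fun x hx => le_trans har hx.1)).pow 2)
      · apply ContinuousOn.mul ?_ ((hηcont.mono hsub).pow 2)
        apply ContinuousOn.div continuousOn_const (continuousOn_id.pow 2)
        intro x hx
        exact pow_ne_zero 2 (ne_of_gt (lt_of_lt_of_le h0r hx.1))
  have hΦeq3 : ∀ x ∈ Ioc r (2*r), Φ x = Φ₃ x := by
    intro x hx
    have hax : a < x := lt_of_le_of_lt har hx.1
    have hh : h x = -(kr * g x) := by
      simp only [hhdef]
      rw [if_neg (not_le.2 hax), if_neg (not_le.2 hx.1), if_pos hx.2]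
    simp only [hΦdef, hΦ₃def]
    rw [hh, neg_sq]
  have hint3 : IntervalIntegrable Φ MeasureTheory.volume r (2*r) := by
    apply II.congrOn ((hΦ₃cont.mono (by rw [uIcc_of_le hrr.le])).intervalIntegrable)
    intro x hx
    rw [Set.uIoc_of_le hrr.le] at hx
    exact (hΦeq3 x hx).symm
  have hB1 : (∫ t in R₁..a, Φ t) = -c := by
    have e1 : (∫ t in R₁..a, Φ t) = ∫ t in R₁..a, Φ₁ t := by
      apply intervalIntegral.integral_congr
      rw [uIcc_of_le hRa]
      exact hΦeq1
    have e2 : (∫ t in R₁..a, Φ₁ t)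
        = ∫ t in R₁..a, (-E) * (t ^ ((N : ℝ) - 3) * (ur t) ^ 2) := by
      apply intervalIntegral.integral_congr
      intro t ht
      rw [uIcc_of_le hRa] at ht
      have ht0 : (0:ℝ) < t := lt_of_lt_of_le h0R ht.1
      have hsp : t ^ ((N:ℝ) - 1) = t ^ ((N:ℝ) - 3) * t ^ (2:ℕ) := by
        rw [← Real.rpow_natCast t 2, ← Real.rpow_add ht0]
        norm_num
        congr 1
        ring
      simp only [hΦ₁def, hEdef]
      rw [hsp]
      have ht2 : (t:ℝ) ^ (2:ℕ) ≠ 0 := pow_ne_zero 2 ht0.ne'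
      field_simp
      ring
    rw [e1, e2, intervalIntegral.integral_const_mul, hcdef]
    ring
  have hB2 : (∫ t in a..r, Φ t) = 0 := by
    have : (∫ t in a..r, Φ t) = ∫ t in a..r, (0:ℝ) := by
      apply intervalIntegral.integral_congr_ae
      apply Filter.Eventually.of_forall
      intro x hx
      rw [Set.uIoc_of_le har] at hx
      exact hΦzero x hx
    rw [this]
    simp
  have hB3 : (∫ t in r..2*r, Φ t) ≤ kr ^ 2 * (2*r) ^ ((N:ℝ) - 1) * Ir := by
    have e1 : (∫ t in r..2*r, Φ t) = ∫ t in r..2*r, Φ₃ t := by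
      apply intervalIntegral.integral_congr_ae
      apply Filter.Eventually.of_forall
      intro x hx
      rw [Set.uIoc_of_le hrr.le] at hx
      exact hΦeq3 x hx
    have hint3' : IntervalIntegrable Φ₃ MeasureTheory.volume r (2*r) :=
      (hΦ₃cont.mono (by rw [uIcc_of_le hrr.le])).intervalIntegrable
    have hRHSint : IntervalIntegrable (fun t => kr ^ 2 * (2*r) ^ ((N:ℝ) - 1) * g t)
        MeasureTheory.volume r (2*r) := hgInt.const_mul _
    have hpt : ∀ t ∈ Icc r (2*r), Φ₃ t ≤ kr ^ 2 * (2*r) ^ ((N:ℝ) - 1) * g t := by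
      intro t ht
      have hat : a ≤ t := le_trans har ht.1
      have ht0 : (0:ℝ) < t := lt_of_lt_of_le h0r ht.1
      have hnet : ur t ≠ 0 := hne t hat
      have hgt : 0 < g t := hgpos t hat
      have hX0 : 0 ≤ t ^ ((N:ℝ) - 1) * (ur t) ^ 2 *
          (((N : ℝ) - 1) / t ^ 2 * (η t) ^ 2) := by
        apply mul_nonneg (mul_nonneg (Real.rpow_nonneg ht0.le _) (sq_nonneg _))
        apply mul_nonneg (div_nonneg (by linarith) (sq_nonneg _)) (sq_nonneg _)
      have h1 : Φ₃ t ≤ t ^ ((N:ℝ) - 1) * (ur t) ^ 2 * (kr * g t) ^ 2 := by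
        simp only [hΦ₃def]
        nlinarith [hX0]
      have h2 : t ^ ((N:ℝ) - 1) * (ur t) ^ 2 * (kr * g t) ^ 2
          = kr ^ 2 * t ^ ((N:ℝ) - 1) * g t := by
        simp only [hgdef]
        field_simp
      have h3 : kr ^ 2 * t ^ ((N:ℝ) - 1) * g t ≤ kr ^ 2 * (2*r) ^ ((N:ℝ) - 1) * g t := by
        have ht2r : t ^ ((N:ℝ) - 1) ≤ (2*r) ^ ((N:ℝ) - 1) :=
          Real.rpow_le_rpow ht0.le ht.2 (by linarith)
        have : 0 ≤ kr ^ 2 := sq_nonneg kr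
        nlinarith
      linarith [h1, h2.le, h3]
    have := intervalIntegral.integral_mono_on hrr.le hint3' hRHSint hpt
    rw [e1]
    calc (∫ t in r..2*r, Φ₃ t) ≤ ∫ t in r..2*r, kr ^ 2 * (2*r) ^ ((N:ℝ) - 1) * g t := this
      _ = kr ^ 2 * (2*r) ^ ((N:ℝ) - 1) * Ir := by
          rw [intervalIntegral.integral_const_mul, ← hIrdef]
  have hsplit : (∫ t in R₁..2*r, Φ t) = (∫ t in R₁..a, Φ t) + (∫ t in a..r, Φ t)
      + (∫ t in r..2*r, Φ t) := by
    rw [← intervalIntegral.integral_add_adjacent_intervals hint1 (hint2.trans hint3),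
      ← intervalIntegral.integral_add_adjacent_intervals hint2 hint3]
    ring
  -- conclude
  have hcle : c ≤ kr ^ 2 * (2*r) ^ ((N:ℝ) - 1) * Ir := by
    have := hQΦ
    rw [hsplit, hB1, hB2] at this
    linarith [hB3]
  have hkey : kr ^ 2 * (2*r) ^ ((N:ℝ) - 1) * Ir = (r ^ (-β)) ^ 2 * (2*r) ^ ((N:ℝ)-1) / Ir := by
    rw [hkrdef]
    field_simp
  have hfinal : Ir ≤ (r ^ (-β)) ^ 2 * (2*r) ^ ((N:ℝ)-1) / c := by
    rw [hkey] at hcle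
    have h1 := (le_div_iff₀ hIr).1 hcle
    rw [le_div_iff₀ hc]
    nlinarith
  have hval : (r ^ (-β)) ^ 2 * (2*r) ^ ((N:ℝ)-1) / c
      = 2 ^ ((N:ℝ) - 1) / c * r ^ ((N : ℝ) - 2 * β - 1) := by
    have e1 : (2*r) ^ ((N:ℝ)-1) = 2 ^ ((N:ℝ)-1) * r ^ ((N:ℝ)-1) :=
      Real.mul_rpow (by norm_num) h0r.le
    have e2 : (r ^ (-β)) ^ 2 * r ^ ((N:ℝ)-1) = r ^ ((N : ℝ) - 2 * β - 1) := by
      rw [sq, ← Real.rpow_add h0r, ← Real.rpow_add h0r]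
      congr 1
      ring
    rw [e1, show (r ^ (-β)) ^ 2 * (2 ^ ((N:ℝ)-1) * r ^ ((N:ℝ)-1)) / c
      = 2 ^ ((N:ℝ)-1) / c * ((r ^ (-β)) ^ 2 * r ^ ((N:ℝ)-1)) by ring, e2]
  calc (∫ s in r..2*r, 1 / (ur s) ^ 2) = Ir := rfl
    _ ≤ (r ^ (-β)) ^ 2 * (2*r) ^ ((N:ℝ)-1) / c := hfinal
    _ = 2 ^ ((N:ℝ) - 1) / c * r ^ ((N : ℝ) - 2 * β - 1) := hval
end
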